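/- arXiv:1007.3546 — 5 statements merged into one kernel-verified Lean document; each statement's English description precedes it below -/
import Mathlib

section
/- Let G be a finite k-regular graph, Ω ⊆ V(G), and let λ(Ω) = min{ D[f,f]/⟨f,f⟩ : f supported on Ω, f ≠ 0 } be the first Dirichlet eigenvalue of Ω. Let φ be a minimizer attaining λ(Ω), extended by zero to f on all of G, with f ≥ 0. If f₁,…,f_d are images of f under graph automorphisms of G and F = Σᵢ fᵢ, then D[F,F] ≤ λ(Ω)·⟨F,F⟩. -/
/-!
Write `L` for the Laplacian. On a vertex `x ∈ Ω` the minimizer satisfies `L f x = λ f x`: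
the quadratic form `g ↦ ⟨g, L g⟩ - λ ⟨g, g⟩` is nonnegative on functions supported in `Ω` and
vanishes at `f`, so along the line `f + t δₓ` its linear coefficient `2 (L f x - λ f x)` must vanish.
Off `Ω`, `f x = 0` and `L f x = -∑_{y ~ x} f y ≤ 0`. Hence `L f ≤ λ f` pointwise. Since `L` commutes
with automorphisms and is linear, `L F ≤ λ F` pointwise, and pairing with `F ≥ 0` gives the claim.
-/

open Matrix

namespace Matrix

variable {n K : Type*} [Fintype n] [Field K] [LinearOrder K] [IsStrictOrderedRing K]

theorem IsSymm.dotProduct_mulVec_eq_zero_of_nonneg {A : Matrix n n K} (hA : A.IsSymm)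
    {f e : n → K} (hnonneg : ∀ t : K, 0 ≤ (f + t • e) ⬝ᵥ A *ᵥ (f + t • e))
    (hf : f ⬝ᵥ A *ᵥ f = 0) : e ⬝ᵥ A *ᵥ f = 0 := by
  have hsymm : f ⬝ᵥ A *ᵥ e = e ⬝ᵥ A *ᵥ f := by
    rw [← dotProduct_transpose_mulVec, hA.eq]
  have hdiscrim : discrim (e ⬝ᵥ A *ᵥ e) (2 * (e ⬝ᵥ A *ᵥ f)) 0 ≤ 0 :=
    discrim_le_zero fun t => by
      convert hnonneg t using 1
      simp only [mulVec_add, mulVec_smul, dotProduct_add, add_dotProduct, dotProduct_smul,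
        smul_dotProduct, hf, hsymm, smul_eq_mul]
      ring
  rw [discrim] at hdiscrim
  nlinarith [sq_nonneg (e ⬝ᵥ A *ᵥ f)]

theorem IsSymm.mulVec_apply_eq_of_rayleigh_min [DecidableEq n] {L : Matrix n n K}
    (hL : L.IsSymm) {Ω : Set n} {lam : K}
    (hmin : ∀ g : n → K, (∀ x ∉ Ω, g x = 0) → lam * (g ⬝ᵥ g) ≤ g ⬝ᵥ L *ᵥ g)
    {f : n → K} (hfΩ : ∀ x ∉ Ω, f x = 0) (hf : f ⬝ᵥ L *ᵥ f = lam * (f ⬝ᵥ f))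
    {x : n} (hx : x ∈ Ω) : (L *ᵥ f) x = lam * f x := by
  have hA : (L - lam • 1).IsSymm := hL.sub (isSymm_one.smul lam)
  have hquad : ∀ g : n → K, g ⬝ᵥ (L - lam • 1) *ᵥ g = g ⬝ᵥ L *ᵥ g - lam * (g ⬝ᵥ g) := by
    intro g
    rw [sub_mulVec, smul_mulVec, one_mulVec, dotProduct_sub, dotProduct_smul, smul_eq_mul]
  have key := hA.dotProduct_mulVec_eq_zero_of_nonneg (f := f) (e := Pi.single x 1)
    (fun t => by
      rw [hquad, sub_nonneg]
      refine hmin _ fun y hy => ?_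
      have hyx : y ≠ x := by rintro rfl; exact hy hx
      simp [hfΩ y hy, hyx])
    (by rw [hquad, hf, sub_self])
  rw [single_dotProduct, one_mul, sub_mulVec, smul_mulVec, one_mulVec] at key
  simpa [sub_eq_zero] using key

end Matrix

namespace SimpleGraph

variable {V W R : Type*} [Fintype V] [Fintype W] {G : SimpleGraph V} {H : SimpleGraph W}
  [DecidableRel G.Adj] [DecidableRel H.Adj]

theorem Iso.lapMatrix_mulVec_comp [NonAssocRing R] [DecidableEq V] [DecidableEq W]
    (φ : G ≃g H) (f : W → R) :
    G.lapMatrix R *ᵥ (f ∘ φ) = (H.lapMatrix R *ᵥ f) ∘ φ := by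
  ext x
  simp only [lapMatrix_mulVec_apply, Function.comp_apply, φ.degree_eq]
  congr 1
  exact Finset.sum_equiv φ.toEquiv (fun y => by simp [φ.map_adj_iff]) (by simp)

theorem lapMatrix_mulVec_apply_nonpos [DecidableEq V] [Ring R] [LinearOrder R] [IsOrderedRing R]
    {f : V → R} (hf : 0 ≤ f) {x : V} (hx : f x = 0) : (G.lapMatrix R *ᵥ f) x ≤ 0 := by
  rw [lapMatrix_mulVec_apply, hx, mul_zero, zero_sub, neg_nonpos]
  exact Finset.sum_nonneg fun y _ => hf y

theorem lapMatrix_mulVec_le_of_rayleigh_min [DecidableEq V] [Field R] [LinearOrder R]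
    [IsStrictOrderedRing R] {Ω : Set V} {lam : R}
    (hmin : ∀ g : V → R, (∀ x ∉ Ω, g x = 0) → lam * (g ⬝ᵥ g) ≤ g ⬝ᵥ G.lapMatrix R *ᵥ g)
    {f : V → R} (hf : 0 ≤ f) (hfΩ : ∀ x ∉ Ω, f x = 0)
    (hfmin : f ⬝ᵥ G.lapMatrix R *ᵥ f = lam * (f ⬝ᵥ f)) (x : V) :
    (G.lapMatrix R *ᵥ f) x ≤ lam * f x := by
  by_cases hx : x ∈ Ω
  · exact ((G.isSymm_lapMatrix R).mulVec_apply_eq_of_rayleigh_min hmin hfΩ hfmin hx).le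
  · rw [hfΩ x hx, mul_zero]
    exact lapMatrix_mulVec_apply_nonpos hf (hfΩ x hx)

theorem lapMatrix_mulVec_sum_comp_le [DecidableEq V] [Ring R] [LinearOrder R] [IsOrderedRing R]
    {lam : R} {f : V → R} (hf : ∀ x, (G.lapMatrix R *ᵥ f) x ≤ lam * f x)
    {ι : Type*} (s : Finset ι) (τ : ι → G ≃g G) (x : V) :
    (G.lapMatrix R *ᵥ ∑ i ∈ s, f ∘ τ i) x ≤ lam * (∑ i ∈ s, f ∘ τ i) x := by
  rw [mulVec_sum, Finset.sum_apply, Finset.sum_apply, Finset.mul_sum]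
  gcongr with i
  rw [(τ i).lapMatrix_mulVec_comp]
  exact hf (τ i x)

end SimpleGraph

open SimpleGraph in
/-- If `f` is a nonnegative minimizer of the Dirichlet quotient on `Ω` (extended by
zero), and `F = Σᵢ f∘τᵢ` for graph automorphisms `τᵢ`, then `D[F,F] ≤ λ(Ω)·⟨F,F⟩`. -/
theorem stmt_3 {V : Type*} [Fintype V] [DecidableEq V]
    (G : SimpleGraph V) [DecidableRel G.Adj] (k : ℕ)
    (hreg : G.IsRegularOfDegree k)
    (lap : (V → ℝ) → (V → ℝ))
    (hlap : ∀ f x, lap f x = k * f x - ∑ y ∈ G.neighborFinset x, f y)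
    (Ω : Finset V) (lam : ℝ)
    (hmin : IsLeast {r : ℝ | ∃ g : V → ℝ, g ≠ 0 ∧ (∀ x, x ∉ Ω → g x = 0) ∧
      r = (∑ x, g x * lap g x) / (∑ x, (g x) ^ 2)} lam)
    (f : V → ℝ) (hf0 : f ≠ 0) (hfpos : ∀ x, 0 ≤ f x) (hfsupp : ∀ x, x ∉ Ω → f x = 0)
    (hfattain : (∑ x, f x * lap f x) / (∑ x, (f x) ^ 2) = lam)
    (d : ℕ) (τ : Fin d → G ≃g G)
    (F : V → ℝ) (hF : ∀ x, F x = ∑ i, f (τ i x)) :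
    ∑ x, F x * lap F x ≤ lam * ∑ x, (F x) ^ 2 := by
  obtain rfl : lap = (G.lapMatrix ℝ *ᵥ ·) := by
    ext g x
    rw [hlap, lapMatrix_mulVec_apply, hreg.degree_eq]
  obtain rfl : F = ∑ i, f ∘ τ i := by
    ext x
    simp [hF]
  have hsq : ∀ g : V → ℝ, ∑ x, g x ^ 2 = g ⬝ᵥ g := fun g => by simp only [sq]; rfl
  have hpos : ∀ g : V → ℝ, g ≠ 0 → 0 < g ⬝ᵥ g := fun g hg => by
    simpa using dotProduct_self_star_pos_iff.mpr hg
  have hrayleigh : ∀ g : V → ℝ, (∀ x ∉ (Ω : Set V), g x = 0) →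
      lam * (g ⬝ᵥ g) ≤ g ⬝ᵥ G.lapMatrix ℝ *ᵥ g := by
    intro g hgΩ
    rcases eq_or_ne g 0 with rfl | hg
    · simp
    rw [← le_div_iff₀ (hpos g hg), ← hsq]
    exact hmin.2 ⟨g, hg, hgΩ, rfl⟩
  have hfmin : f ⬝ᵥ G.lapMatrix ℝ *ᵥ f = lam * (f ⬝ᵥ f) := by
    rw [← hfattain, hsq, div_mul_cancel₀ _ (hpos f hf0).ne']
    rfl
  have hsub := lapMatrix_mulVec_sum_comp_le
    (lapMatrix_mulVec_le_of_rayleigh_min hrayleigh hfpos hfsupp hfmin) Finset.univ τ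
  have hFpos : 0 ≤ ∑ i, f ∘ τ i := Finset.sum_nonneg fun i _ x => hfpos (τ i x)
  rw [hsq, dotProduct_comm, ← smul_eq_mul, ← dotProduct_smul]
  exact Finset.sum_le_sum fun x _ => mul_le_mul_of_nonneg_left (hsub x) (hFpos x)
end

section
/- Let M be a commutative association scheme with 1-transitive symmetry group, o ∈ M a fixed point, D = {y₁,…,y_d} a design of strength t (i.e., Σ_{x∈D} φ(x) = 0 for every Laplacian eigenfunction φ with eigenvalue θ, 0 < θ < t), and τᵢ symmetries with τᵢ(yᵢ) = o. Let f be a spherical function around o and F(y) = Σᵢ f(τᵢ y). Then ⟨F, φ⟩ = 0 for every eigenfunction φ of the Laplacian with eigenvalue θ satisfying 0 < θ < t. -/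
/-!
Unfolding `f = ∑ₖ cₖ Aₖ δₒ` and using that `τᵢ` preserves every relation and sends `yᵢ` to `o`,
one gets `⟨F, φ⟩ = ∑ₖ cₖ ∑ᵢ (Aₖ φ)(yᵢ)`. Since the Bose–Mesner algebra is commutative, each
`Aₖ φ` is again a `θ`-eigenfunction of the Laplacian (or zero), so the design kills every
inner sum.
-/

open Matrix Finset

def deltaFn {X : Type*} [DecidableEq X] (o : X) : X → ℝ := fun y => if y = o then 1 else 0

theorem sum_smul_mul_sum_smul_of_orthogonal {R M ι : Type*} [CommSemiring R] [Semiring M]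
    [Algebra R M] [Fintype ι] [DecidableEq ι] (E : ι → M)
    (hE : ∀ j l, E j * E l = if j = l then E j else 0) (a b : ι → R) :
    (∑ j, a j • E j) * (∑ j, b j • E j) = ∑ j, (a j * b j) • E j := by
  rw [sum_mul_sum]
  refine sum_congr rfl fun j _ => ?_
  simp_rw [smul_mul_smul_comm, hE, smul_ite, smul_zero, sum_ite_eq, if_pos (mem_univ j)]

theorem commute_sum_smul_of_orthogonal {R M ι : Type*} [CommSemiring R] [Semiring M]
    [Algebra R M] [Fintype ι] [DecidableEq ι] (E : ι → M)
    (hE : ∀ j l, E j * E l = if j = l then E j else 0) (a b : ι → R) :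
    Commute (∑ j, a j • E j) (∑ j, b j • E j) := by
  simp_rw [Commute, SemiconjBy, sum_smul_mul_sum_smul_of_orthogonal E hE, mul_comm]

theorem mulVec_mulVec_eq_smul_of_commute {X R : Type*} [Fintype X] [CommSemiring R]
    {A B : Matrix X X R} (hAB : Commute B A) {φ : X → R} {μ : R} (hφ : A *ᵥ φ = μ • φ) :
    A *ᵥ (B *ᵥ φ) = μ • (B *ᵥ φ) := by
  rw [mulVec_mulVec, ← hAB.eq, ← mulVec_mulVec, hφ, mulVec_smul]

theorem laplacian_eigen_iff_mulVec_eq_smul {X : Type*} [Fintype X] {lap : (X → ℝ) → X → ℝ}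
    {A : Matrix X X ℝ} {c : ℝ} (hlap : ∀ f x, lap f x = c * f x - (A *ᵥ f) x) (θ : ℝ)
    (φ : X → ℝ) : (∀ x, lap φ x = θ * φ x) ↔ A *ᵥ φ = (c - θ) • φ := by
  simp_rw [funext_iff, hlap, Pi.smul_apply, smul_eq_mul]
  exact forall_congr' fun x => by constructor <;> intro h <;> linarith

theorem mulVec_deltaFn {X : Type*} [Fintype X] [DecidableEq X] (A : Matrix X X ℝ) (o : X) :
    A *ᵥ deltaFn o = A.col o := by
  rw [← mulVec_single_one]
  congr
  funext z
  simp [deltaFn, Pi.single_apply]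

theorem sum_mulVec_deltaFn_comp_mul {X : Type*} [Fintype X] [DecidableEq X]
    {A : Matrix X X ℝ} (hA : A.IsSymm) {σ : X ≃ X} (hσ : ∀ a b, A (σ a) (σ b) = A a b)
    {y o : X} (hy : σ y = o) (φ : X → ℝ) :
    ∑ x, (A *ᵥ deltaFn o) (σ x) * φ x = (A *ᵥ φ) y := by
  simp only [mulVec_deltaFn, col_apply, ← hy, hσ, hA.apply]
  rfl

theorem stmt_8_general {X : Type*} [Fintype X] [DecidableEq X] (m : ℕ)
    (A E : Fin (m + 1) → Matrix X X ℝ) (n : Fin (m + 1) → ℝ)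
    (p : Fin (m + 1) → Fin (m + 1) → ℝ)
    (hAsym : ∀ k, (A k).IsSymm)
    (hEidem : ∀ j l, E j * E l = if j = l then E j else 0)
    (hAE : ∀ k, A k = ∑ j, p k j • E j)
    -- the Laplacian `Δ = n₁·I − A₁`
    (lap : (X → ℝ) → (X → ℝ))
    (hlap : ∀ f x, lap f x = n 1 * f x - (A 1).mulVec f x)
    (o : X) (t : ℝ) (d : ℕ) (y : Fin d → X)
    -- `D = {y₁,…,y_d}` is a design of strength `t`
    (hdesign : ∀ (θ : ℝ) (φ : X → ℝ), φ ≠ 0 → (∀ x, lap φ x = θ * φ x) →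
      0 < θ → θ < t → ∑ i, φ (y i) = 0)
    (τ : Fin d → X ≃ X)
    (hτsym : ∀ i k a b, A k (τ i a) (τ i b) = A k a b)
    (hτ : ∀ i, τ i (y i) = o)
    -- `f` is spherical around `o`
    (f : X → ℝ) (hf : ∃ c : Fin (m + 1) → ℝ,
      f = fun x => ∑ k, c k * (A k).mulVec (deltaFn o) x)
    (F : X → ℝ) (hF : ∀ x, F x = ∑ i, f (τ i x)) :
    ∀ (θ : ℝ) (φ : X → ℝ), φ ≠ 0 → (∀ x, lap φ x = θ * φ x) →
      0 < θ → θ < t → ∑ x, F x * φ x = 0 := by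
  intro θ φ _ hφ hθ0 hθt
  obtain ⟨c, rfl⟩ := hf
  have hA1φ := (laplacian_eigen_iff_mulVec_eq_smul hlap θ φ).1 hφ
  have hdesign_mulVec : ∀ k, ∑ i, (A k *ᵥ φ) (y i) = 0 := by
    intro k
    by_cases h0 : A k *ᵥ φ = 0
    · simp [h0]
    have hcomm : Commute (A k) (A 1) := by
      rw [hAE k, hAE 1]
      exact commute_sum_smul_of_orthogonal E hEidem _ _
    exact hdesign θ _ h0 ((laplacian_eigen_iff_mulVec_eq_smul hlap θ _).2
      (mulVec_mulVec_eq_smul_of_commute hcomm hA1φ)) hθ0 hθt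
  calc ∑ x, F x * φ x
      = ∑ i, ∑ k, c k * ∑ x, (A k *ᵥ deltaFn o) (τ i x) * φ x := by
        simp_rw [hF, sum_mul, mul_sum, mul_assoc]
        rw [sum_comm]
        exact sum_congr rfl fun i _ => sum_comm
    _ = ∑ k, c k * ∑ i, (A k *ᵥ φ) (y i) := by
        simp_rw [sum_mulVec_deltaFn_comp_mul (hAsym _) (hτsym _ _) (hτ _), mul_sum]
        exact sum_comm
    _ = 0 := by simp [hdesign_mulVec]

/-- In a commutative association scheme with `1`-transitive symmetry group, if `D`
is a design of strength `t`, `τᵢ` are symmetries taking the design points to `o`,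
`f` is spherical around `o` and `F(y) = Σᵢ f(τᵢ y)`, then `⟨F,φ⟩ = 0` for every
Laplacian eigenfunction `φ` with eigenvalue `θ ∈ (0,t)`. -/
theorem stmt_8 {X : Type*} [Fintype X] [DecidableEq X] [Nonempty X] (m : ℕ)
    (A E : Fin (m + 1) → Matrix X X ℝ) (n mult : Fin (m + 1) → ℝ)
    (p : Fin (m + 1) → Fin (m + 1) → ℝ)
    (hA0 : A 0 = 1)
    (hA01 : ∀ k x y, A k x y = 0 ∨ A k x y = 1)
    (hAsym : ∀ k, (A k).IsSymm)
    (hAsum : ∑ k, A k = Matrix.of fun _ _ => (1 : ℝ))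
    (hrow : ∀ k x, ∑ y, A k x y = n k)
    (hnpos : ∀ k, 0 < n k)
    (hEsym : ∀ j, (E j).IsSymm)
    (hEidem : ∀ j l, E j * E l = if j = l then E j else 0)
    (hEsum : ∑ j, E j = 1)
    (hAE : ∀ k, A k = ∑ j, p k j • E j)
    (hEA : ∀ j, ∃ q : Fin (m + 1) → ℝ, E j = ∑ k, q k • A k)
    (hmult : ∀ j, (E j).trace = mult j)
    (hmultpos : ∀ j, 0 < mult j)
    -- the symmetry group acts `1`-transitively
    (htrans : ∀ x y : X, ∃ σ : X ≃ X, (∀ k a b, A k (σ a) (σ b) = A k a b) ∧ σ x = y)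
    -- the Laplacian `Δ = n₁·I − A₁`
    (lap : (X → ℝ) → (X → ℝ))
    (hlap : ∀ f x, lap f x = n 1 * f x - (A 1).mulVec f x)
    (o : X) (t : ℝ) (d : ℕ) (y : Fin d → X)
    -- `D = {y₁,…,y_d}` is a design of strength `t`
    (hdesign : ∀ (θ : ℝ) (φ : X → ℝ), φ ≠ 0 → (∀ x, lap φ x = θ * φ x) →
      0 < θ → θ < t → ∑ i, φ (y i) = 0)
    (τ : Fin d → X ≃ X)
    (hτsym : ∀ i k a b, A k (τ i a) (τ i b) = A k a b)
    (hτ : ∀ i, τ i (y i) = o)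
    -- `f` is spherical around `o`
    (f : X → ℝ) (hf : ∃ c : Fin (m + 1) → ℝ,
      f = fun x => ∑ k, c k * (A k).mulVec (deltaFn o) x)
    (F : X → ℝ) (hF : ∀ x, F x = ∑ i, f (τ i x)) :
    ∀ (θ : ℝ) (φ : X → ℝ), φ ≠ 0 → (∀ x, lap φ x = θ * φ x) →
      0 < θ → θ < t → ∑ x, F x * φ x = 0 :=
  stmt_8_general m A E n p hAsym hEidem hAE lap hlap o t d y hdesign τ hτsym hτ f hf F hF
end

section
/- Let G be a finite k-regular graph with automorphism group I acting transitively, and suppose I is abelian. Let D = {y₁,…,y_d} be a design of strength t, o a fixed vertex, and τᵢ ∈ I with τᵢyᵢ = o. Then for every vertex y, the multiset {τᵢ⁻¹y : i = 1,…,d} is the image of D under a single automorphism of G; consequently Σᵢ φ(τᵢ⁻¹ y) = 0 for every Laplacian eigenfunction φ with eigenvalue in (0,t), and hence F = Σᵢ f∘τᵢ is orthogonal to all such φ for any f : V(G) → ℝ. -/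
/-! Since `I` is abelian, for `β` with `β • y = o` we get
`β⁻¹ • yᵢ = β⁻¹ • τᵢ⁻¹ • o = τᵢ⁻¹ • β⁻¹ • o = τᵢ⁻¹ • y`, so the points `τᵢ⁻¹ • y` are the
image of the design under the automorphism `β⁻¹`. Automorphisms carry Laplacian eigenfunctions
to eigenfunctions with the same eigenvalue, so the design property applied to `φ ∘ β⁻¹` gives
`∑ᵢ φ (τᵢ⁻¹ • y) = 0`; orthogonality of `∑ᵢ f ∘ τᵢ` to `φ` follows by changing variables in
each summand. -/

section Action

variable {I V : Type*} [CommGroup I] [MulAction I V]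

lemma inv_smul_eq_inv_smul_of_smul_eq {τ β : I} {a b o : V} (ha : τ • a = o) (hb : β • b = o) :
    β⁻¹ • a = τ⁻¹ • b := by
  rw [← inv_smul_eq_iff.mpr ha.symm, ← inv_smul_eq_iff.mpr hb.symm, smul_smul, smul_smul,
    mul_comm]

end Action

section Laplacian

variable {I V : Type*} [Group I] [MulAction I V] [Fintype V] {G : SimpleGraph V}
  [DecidableRel G.Adj]

lemma sum_neighborFinset_comp_smul (hauto : ∀ (g : I) (x y : V), G.Adj (g • x) (g • y) ↔ G.Adj x y)
    (g : I) (φ : V → ℝ) (x : V) :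
    ∑ y ∈ G.neighborFinset x, φ (g • y) = ∑ z ∈ G.neighborFinset (g • x), φ z := by
  refine Finset.sum_nbij' (g • ·) (g⁻¹ • ·) ?_ ?_ (fun _ _ ↦ inv_smul_smul g _)
    (fun _ _ ↦ smul_inv_smul g _) (fun _ _ ↦ rfl)
  · intro y hy
    simpa [SimpleGraph.mem_neighborFinset, hauto] using hy
  · intro z hz
    simpa [SimpleGraph.mem_neighborFinset, ← hauto g⁻¹ (g • x) z] using hz

lemma eigenfunction_comp_smul {k : ℕ}
    (hauto : ∀ (g : I) (x y : V), G.Adj (g • x) (g • y) ↔ G.Adj x y)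
    {lap : (V → ℝ) → (V → ℝ)} (hlap : ∀ f x, lap f x = k * f x - ∑ y ∈ G.neighborFinset x, f y)
    {θ : ℝ} {φ : V → ℝ} (hφ : ∀ x, lap φ x = θ * φ x) (g : I) (x : V) :
    lap (fun z ↦ φ (g • z)) x = θ * φ (g • x) := by
  rw [hlap, sum_neighborFinset_comp_smul hauto, ← hlap, hφ]

end Laplacian

lemma comp_smul_ne_zero {I V : Type*} [Group I] [MulAction I V] {φ : V → ℝ} (hφ : φ ≠ 0) (g : I) :
    (fun z ↦ φ (g • z)) ≠ 0 := by
  contrapose! hφ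
  funext w
  simpa using congrFun hφ (g⁻¹ • w)

lemma sum_sum_comp_smul_mul {I V ι : Type*} [Group I] [MulAction I V] [Fintype V] [Fintype ι]
    (τ : ι → I) (f φ : V → ℝ) :
    ∑ x, (∑ i, f (τ i • x)) * φ x = ∑ y, f y * ∑ i, φ ((τ i)⁻¹ • y) := by
  have hshift : ∀ i, ∑ x, f (τ i • x) * φ x = ∑ y, f y * φ ((τ i)⁻¹ • y) := fun i ↦ by
    simpa using (Equiv.sum_comp (MulAction.toPerm (τ i)) fun y ↦ f y * φ ((τ i)⁻¹ • y))
  simp_rw [Finset.sum_mul, Finset.mul_sum]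
  rw [Finset.sum_comm]
  simp_rw [hshift]
  rw [Finset.sum_comm]

theorem stmt_10_general {V : Type*} [Fintype V]
    (G : SimpleGraph V) [DecidableRel G.Adj] (k : ℕ)
    (I : Type*) [CommGroup I] [MulAction I V]
    (hauto : ∀ (g : I) (x y : V), G.Adj (g • x) (g • y) ↔ G.Adj x y)
    (htrans : ∀ x y : V, ∃ g : I, g • x = y)
    (lap : (V → ℝ) → (V → ℝ))
    (hlap : ∀ f x, lap f x = k * f x - ∑ y ∈ G.neighborFinset x, f y)
    (t : ℝ) (d : ℕ) (ys : Fin d → V) (o : V)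
    (hdesign : ∀ (θ : ℝ) (φ : V → ℝ), φ ≠ 0 → (∀ x, lap φ x = θ * φ x) →
      0 < θ → θ < t → ∑ i, φ (ys i) = 0)
    (τ : Fin d → I) (hτ : ∀ i, τ i • ys i = o) :
    (∀ y : V, ∃ β : I, ∀ i, β⁻¹ • ys i = (τ i)⁻¹ • y) ∧
    (∀ (θ : ℝ) (φ : V → ℝ), φ ≠ 0 → (∀ x, lap φ x = θ * φ x) → 0 < θ → θ < t →
      (∀ y : V, ∑ i, φ ((τ i)⁻¹ • y) = 0) ∧
      (∀ f : V → ℝ, ∑ x, (∑ i, f (τ i • x)) * φ x = 0)) := by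
  have translate : ∀ y : V, ∃ β : I, ∀ i, β⁻¹ • ys i = (τ i)⁻¹ • y := fun y ↦ by
    obtain ⟨β, hβ⟩ := htrans y o
    exact ⟨β, fun i ↦ inv_smul_eq_inv_smul_of_smul_eq (hτ i) hβ⟩
  have vanish : ∀ (θ : ℝ) (φ : V → ℝ), φ ≠ 0 → (∀ x, lap φ x = θ * φ x) → 0 < θ → θ < t →
      ∀ y : V, ∑ i, φ ((τ i)⁻¹ • y) = 0 := by
    intro θ φ hne hφ h0 ht y
    obtain ⟨β, hβ⟩ := translate y
    simpa only [hβ] using hdesign θ _ (comp_smul_ne_zero hne β⁻¹)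
      (eigenfunction_comp_smul hauto hlap hφ β⁻¹) h0 ht
  refine ⟨translate, fun θ φ hne hφ h0 ht ↦ ⟨vanish θ φ hne hφ h0 ht, fun f ↦ ?_⟩⟩
  simp [sum_sum_comp_smul_mul, vanish θ φ hne hφ h0 ht]

/-- If a transitive abelian group `I` of automorphisms acts on a finite `k`-regular
graph, `D = {y₁,…,y_d}` is a design of strength `t`, and `τᵢ ∈ I` with `τᵢyᵢ = o`,
then for every vertex `y` the points `τᵢ⁻¹y` form an image of `D` under a single
automorphism; consequently `Σᵢ φ(τᵢ⁻¹ y) = 0` for every Laplacian eigenfunction `φ`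
with eigenvalue in `(0,t)`, and `F = Σᵢ f∘τᵢ` is orthogonal to all such `φ`. -/
theorem stmt_10 {V : Type*} [Fintype V] [DecidableEq V]
    (G : SimpleGraph V) [DecidableRel G.Adj] (k : ℕ)
    (hreg : G.IsRegularOfDegree k)
    (I : Type*) [CommGroup I] [MulAction I V]
    (hauto : ∀ (g : I) (x y : V), G.Adj (g • x) (g • y) ↔ G.Adj x y)
    (htrans : ∀ x y : V, ∃ g : I, g • x = y)
    (lap : (V → ℝ) → (V → ℝ))
    (hlap : ∀ f x, lap f x = k * f x - ∑ y ∈ G.neighborFinset x, f y)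
    (t : ℝ) (d : ℕ) (ys : Fin d → V) (o : V)
    (hdesign : ∀ (θ : ℝ) (φ : V → ℝ), φ ≠ 0 → (∀ x, lap φ x = θ * φ x) →
      0 < θ → θ < t → ∑ i, φ (ys i) = 0)
    (τ : Fin d → I) (hτ : ∀ i, τ i • ys i = o) :
    (∀ y : V, ∃ β : I, ∀ i, β⁻¹ • ys i = (τ i)⁻¹ • y) ∧
    (∀ (θ : ℝ) (φ : V → ℝ), φ ≠ 0 → (∀ x, lap φ x = θ * φ x) → 0 < θ → θ < t →
      (∀ y : V, ∑ i, φ ((τ i)⁻¹ • y) = 0) ∧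
      (∀ f : V → ℝ, ∑ x, (∑ i, f (τ i • x)) * φ x = 0)) :=
  stmt_10_general G k I hauto htrans lap hlap t d ys o hdesign τ hτ
end

section
/- Let G be a finite k-regular graph with a group I of automorphisms acting transitively on V(G), and I₀ ⊴ I a normal subgroup with I/I₀ abelian. Let D = {y₁,…,y_d} be a design of strength t, o ∈ V(G), τᵢ ∈ I with τᵢyᵢ = o, and let f : V(G) → ℝ be I₀-invariant. Then F = Σᵢ f∘τᵢ is orthogonal to every Laplacian eigenfunction with eigenvalue in (0,t). -/
/-!
Averaging `φ` over `I₀` gives an `I₀`-invariant eigenfunction `ψ` with the same eigenvalue, and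
since `f` is `I₀`-invariant, `|I₀| ⟪F, φ⟫ = ⟪f, Σᵢ ψ (τᵢ⁻¹ ·)⟫`. Because `I/I₀` is abelian, an
`I₀`-invariant function cannot tell `αβ` from `βα`, so `ψ (τᵢ⁻¹ g o) = ψ (g yᵢ)`; the design
property of the eigenfunction `ψ (g ·)` then makes `Σᵢ ψ (τᵢ⁻¹ z)` vanish for every `z = g o`.
-/

open Finset
open scoped commutatorElement

def IsEigenfunction {V : Type*} (L : (V → ℝ) → V → ℝ) (θ : ℝ) (χ : V → ℝ) : Prop :=
  ∀ x, L χ x = θ * χ x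

namespace SimpleGraph

variable {V : Type*} [Fintype V] (G : SimpleGraph V) [DecidableRel G.Adj]

/-- For a `c`-regular graph this is the combinatorial Laplacian `D - A`. -/
def shiftedLaplacian (c : ℝ) (χ : V → ℝ) (x : V) : ℝ :=
  c * χ x - ∑ y ∈ G.neighborFinset x, χ y

variable {G}

theorem shiftedLaplacian_comp_iso (c : ℝ) (σ : G ≃g G) (χ : V → ℝ) (x : V) :
    G.shiftedLaplacian c (χ ∘ σ) x = G.shiftedLaplacian c χ (σ x) := by
  have hnbr : ∑ y ∈ G.neighborFinset x, χ (σ y) = ∑ y ∈ G.neighborFinset (σ x), χ y :=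
    sum_equiv σ.toEquiv (fun y => by simp [σ.map_adj_iff]) fun _ _ => rfl
  simp only [shiftedLaplacian, Function.comp_apply, hnbr]

theorem shiftedLaplacian_sum {ι : Type*} (c : ℝ) (s : Finset ι) (χ : ι → V → ℝ) (x : V) :
    G.shiftedLaplacian c (fun y => ∑ a ∈ s, χ a y) x = ∑ a ∈ s, G.shiftedLaplacian c (χ a) x := by
  simp only [shiftedLaplacian, mul_sum, sum_sub_distrib]
  rw [sum_comm]

end SimpleGraph

section Eigenfunction

variable {V : Type*} [Fintype V] {G : SimpleGraph V} [DecidableRel G.Adj]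

open SimpleGraph

theorem IsEigenfunction.comp_smul {I : Type*} [Group I] [MulAction I V]
    (hauto : ∀ (g : I) (x y : V), G.Adj (g • x) (g • y) ↔ G.Adj x y) {c θ : ℝ} {χ : V → ℝ}
    (hχ : IsEigenfunction (G.shiftedLaplacian c) θ χ) (g : I) :
    IsEigenfunction (G.shiftedLaplacian c) θ (fun x => χ (g • x)) := fun x =>
  (shiftedLaplacian_comp_iso c ⟨MulAction.toPerm g, hauto g _ _⟩ χ x).trans (hχ (g • x))

theorem IsEigenfunction.sum {ι : Type*} {c θ : ℝ} {s : Finset ι} {χ : ι → V → ℝ}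
    (hχ : ∀ a ∈ s, IsEigenfunction (G.shiftedLaplacian c) θ (χ a)) :
    IsEigenfunction (G.shiftedLaplacian c) θ (fun x => ∑ a ∈ s, χ a x) := fun x => by
  rw [shiftedLaplacian_sum, mul_sum]
  exact sum_congr rfl fun a ha => hχ a ha x

end Eigenfunction

section Averaging

variable {I V : Type*} [Group I] [MulAction I V]

theorem apply_mul_smul_comm {H : Subgroup I} {ψ : V → ℝ} (hψ : ∀ a ∈ H, ∀ x, ψ (a • x) = ψ x)
    {g h : I} (hgh : ⁅g, h⁆ ∈ H) (x : V) : ψ ((g * h) • x) = ψ ((h * g) • x) := by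
  rw [← hψ _ hgh ((h * g) • x), smul_smul]
  congr 2
  group

variable (H : Subgroup I) [Fintype H]

def orbitSum (φ : V → ℝ) (x : V) : ℝ :=
  ∑ α : H, φ ((α : I) • x)

variable {H}

theorem orbitSum_smul_of_mem (φ : V → ℝ) {a : I} (ha : a ∈ H) (x : V) :
    orbitSum H φ (a • x) = orbitSum H φ x :=
  Fintype.sum_equiv (Equiv.mulRight ⟨a, ha⟩) _ _ fun α => by simp [mul_smul]

theorem sum_mul_smul_eq_orbitSum [H.Normal] (φ : V → ℝ) (g : I) (x : V) :
    ∑ α : H, φ ((g * α) • x) = orbitSum H φ (g • x) := by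
  refine Fintype.sum_equiv (MulAut.conjNormal g).toEquiv _ _ fun α => ?_
  simp [← mul_smul]

theorem card_mul_sum_smul_mul_eq [Fintype V] [H.Normal] {f : V → ℝ}
    (hf : ∀ a ∈ H, ∀ x, f (a • x) = f x) (φ : V → ℝ) (g : I) :
    Fintype.card H * ∑ x, f (g • x) * φ x = ∑ z, f z * orbitSum H φ (g⁻¹ • z) := by
  have hshift : ∀ α : H, ∑ z, f z * φ ((g⁻¹ * α) • z) = ∑ x, f (g • x) * φ x := fun α =>
    Fintype.sum_equiv (MulAction.toPerm (g⁻¹ * α)) _ _ fun z => by simp [mul_smul, hf α α.2]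
  calc (Fintype.card H : ℝ) * ∑ x, f (g • x) * φ x
      = ∑ α : H, ∑ z, f z * φ ((g⁻¹ * α) • z) := by simp [hshift]
    _ = ∑ z, f z * orbitSum H φ (g⁻¹ • z) := by
      simp only [← sum_mul_smul_eq_orbitSum, mul_sum]
      exact sum_comm

end Averaging

theorem stmt_12_general {V : Type*} [Fintype V]
    (G : SimpleGraph V) [DecidableRel G.Adj] (k : ℕ)
    (I : Type*) [Group I] [Fintype I] [MulAction I V]
    (hauto : ∀ (g : I) (x y : V), G.Adj (g • x) (g • y) ↔ G.Adj x y)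
    (htrans : ∀ x y : V, ∃ g : I, g • x = y)
    (I₀ : Subgroup I)
    (habelian : ∀ a b : I, a * b * a⁻¹ * b⁻¹ ∈ I₀)
    (lap : (V → ℝ) → (V → ℝ))
    (hlap : ∀ f x, lap f x = k * f x - ∑ y ∈ G.neighborFinset x, f y)
    (t : ℝ) (d : ℕ) (ys : Fin d → V) (o : V)
    (hdesign : ∀ (θ : ℝ) (φ : V → ℝ), φ ≠ 0 → (∀ x, lap φ x = θ * φ x) →
      0 < θ → θ < t → ∑ i, φ (ys i) = 0)
    (τ : Fin d → I) (hτ : ∀ i, τ i • ys i = o)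
    (f : V → ℝ) (hfinv : ∀ α ∈ I₀, ∀ x : V, f (α • x) = f x)
    (F : V → ℝ) (hF : ∀ x, F x = ∑ i, f (τ i • x)) :
    ∀ (θ : ℝ) (φ : V → ℝ), φ ≠ 0 → (∀ x, lap φ x = θ * φ x) →
      0 < θ → θ < t → ∑ x, F x * φ x = 0 := by
  intro θ φ _ hφ hθ0 hθt
  classical
  obtain rfl : lap = G.shiftedLaplacian k := funext fun χ => funext (hlap χ)
  have : I₀.Normal :=
    .of_commutator_le I <| Subgroup.commutator_le.mpr fun a _ b _ => habelian a b
  set ψ := orbitSum I₀ φ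
  have hψ : IsEigenfunction (G.shiftedLaplacian k) θ ψ :=
    .sum fun α _ => IsEigenfunction.comp_smul hauto hφ α
  have hψ_inv : ∀ a ∈ I₀, ∀ x, ψ (a • x) = ψ x := fun _ ha => orbitSum_smul_of_mem φ ha
  have hψ_design : ∀ z, ∑ i, ψ ((τ i)⁻¹ • z) = 0 := by
    intro z
    obtain ⟨g, rfl⟩ := htrans o z
    have hconj : ∀ i, ψ ((τ i)⁻¹ • g • o) = ψ (g • ys i) := fun i => by
      rw [← hτ i, smul_smul, smul_smul, apply_mul_smul_comm hψ_inv (habelian _ _),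
        mul_inv_cancel_left]
    simp only [hconj]
    by_cases h0 : (fun x => ψ (g • x)) = 0
    · simp [congrFun h0]
    · exact hdesign θ _ h0 (hψ.comp_smul hauto g) hθ0 hθt
  have hcard : (Fintype.card I₀ : ℝ) * ∑ x, F x * φ x = 0 := calc
    _ = ∑ i, Fintype.card I₀ * ∑ x, f (τ i • x) * φ x := by
      simp only [hF, sum_mul, ← mul_sum]
      rw [sum_comm]
    _ = ∑ z, f z * ∑ i, ψ ((τ i)⁻¹ • z) := by
      simp only [card_mul_sum_smul_mul_eq hfinv, mul_sum]
      exact sum_comm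
    _ = 0 := by simp [hψ_design]
  exact (mul_eq_zero.mp hcard).resolve_left (by positivity)

/-- If `I` acts transitively by automorphisms on a finite `k`-regular graph,
`I₀ ⊴ I` is normal with abelian quotient, `D` is a design of strength `t`,
`τᵢ ∈ I` with `τᵢyᵢ = o`, and `f` is `I₀`-invariant, then `F = Σᵢ f∘τᵢ` is
orthogonal to every Laplacian eigenfunction with eigenvalue in `(0,t)`. -/
theorem stmt_12 {V : Type*} [Fintype V] [DecidableEq V]
    (G : SimpleGraph V) [DecidableRel G.Adj] (k : ℕ)
    (hreg : G.IsRegularOfDegree k)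
    (I : Type*) [Group I] [Fintype I] [MulAction I V]
    (hauto : ∀ (g : I) (x y : V), G.Adj (g • x) (g • y) ↔ G.Adj x y)
    (htrans : ∀ x y : V, ∃ g : I, g • x = y)
    (I₀ : Subgroup I) (hnormal : I₀.Normal)
    (habelian : ∀ a b : I, a * b * a⁻¹ * b⁻¹ ∈ I₀)
    (lap : (V → ℝ) → (V → ℝ))
    (hlap : ∀ f x, lap f x = k * f x - ∑ y ∈ G.neighborFinset x, f y)
    (t : ℝ) (d : ℕ) (ys : Fin d → V) (o : V)
    (hdesign : ∀ (θ : ℝ) (φ : V → ℝ), φ ≠ 0 → (∀ x, lap φ x = θ * φ x) →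
      0 < θ → θ < t → ∑ i, φ (ys i) = 0)
    (τ : Fin d → I) (hτ : ∀ i, τ i • ys i = o)
    (f : V → ℝ) (hfinv : ∀ α ∈ I₀, ∀ x : V, f (α • x) = f x)
    (F : V → ℝ) (hF : ∀ x, F x = ∑ i, f (τ i • x)) :
    ∀ (θ : ℝ) (φ : V → ℝ), φ ≠ 0 → (∀ x, lap φ x = θ * φ x) →
      0 < θ → θ < t → ∑ x, F x * φ x = 0 :=
  stmt_12_general G k I hauto htrans I₀ habelian lap hlap t d ys o hdesign τ hτ f hfinv F hF
end

section
/- Let M be a finite set with a transitive group I of symmetries, fix o ∈ M with stabilizer I₀, and let Δ be a symmetric linear operator on ℝ^M commuting with the I-action. Suppose that for each eigenvalue θ of Δ, the space of I₀-invariant θ-eigenfunctions has dimension at most 1, and the unique (up to scalar) invariant eigenfunction φ_θ satisfies φ_θ(o) = 1. Let D = {y₁,…,y_d} satisfy Σ_{x∈D} φ(x) = 0 for all eigenfunctions φ with eigenvalue θ ∈ (0,t), let τᵢ ∈ I with τᵢyᵢ = o, let f be I₀-invariant, and F = Σᵢ f∘τᵢ. Then ⟨F,φ⟩ = 0 for every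 eigenfunction φ with eigenvalue in (0,t). -/
/-!
Summing a `θ`-eigenfunction `φ` over the stabilizer `I₀` of `o` gives an `I₀`-invariant
`θ`-eigenfunction, which by uniqueness is `|I₀| φ(o) φθ`. Hence `⟨f, φ⟩ = φ(o) ⟨f, φθ⟩` for
every `I₀`-invariant `f`. Applied to `φ ∘ τᵢ⁻¹` this gives `⟨f ∘ τᵢ, φ⟩ = φ(yᵢ) ⟨f, φθ⟩`, and
summing over `i` the design property `∑ᵢ φ(yᵢ) = 0` kills the total.
-/

open MulAction

theorem sum_smul_mul_eq_sum_mul_inv_smul {M G : Type*} [Fintype M] [Group G] [MulAction G M]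
    (a : G) (f h : M → ℝ) : ∑ x, f (a • x) * h x = ∑ x, f x * h (a⁻¹ • x) :=
  Fintype.sum_equiv (toPerm a) _ _ fun x => by simp

section StabilizerSum

variable {M : Type*} (G : Type*) [Group G] [Fintype G] [MulAction G M] [DecidableEq M]

def stabilizerSum (o : M) (g : M → ℝ) : M → ℝ :=
  ∑ α : stabilizer G o, fun y => g ((α : G)⁻¹ • y)

variable {G}

theorem stabilizerSum_apply (o : M) (g : M → ℝ) (y : M) :
    stabilizerSum G o g y = ∑ α : stabilizer G o, g ((α : G)⁻¹ • y) :=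
  Finset.sum_apply y _ _

theorem stabilizerSum_smul_of_mem {o : M} (g : M → ℝ) {β : G} (hβ : β ∈ stabilizer G o)
    (y : M) : stabilizerSum G o g (β • y) = stabilizerSum G o g y := by
  simp only [stabilizerSum_apply]
  refine Fintype.sum_equiv (Equiv.mulLeft (⟨β, hβ⟩ : stabilizer G o)⁻¹) _ _ fun α => ?_
  simp [mul_smul]

theorem stabilizerSum_self (o : M) (g : M → ℝ) :
    stabilizerSum G o g o = Fintype.card (stabilizer G o) * g o := by
  have hfix : ∀ α : stabilizer G o, (α : G)⁻¹ • o = o := fun α =>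
    mem_stabilizer_iff.mp (inv_mem α.2)
  simp [stabilizerSum_apply, hfix]

theorem sum_mul_stabilizerSum [Fintype M] {o : M} {f : M → ℝ}
    (hf : ∀ α : G, α ∈ stabilizer G o → ∀ x, f (α • x) = f x) (g : M → ℝ) :
    ∑ y, f y * stabilizerSum G o g y = Fintype.card (stabilizer G o) * ∑ y, f y * g y := by
  have hterm : ∀ α : stabilizer G o, ∑ y, f y * g ((α : G)⁻¹ • y) = ∑ y, f y * g y := by
    intro α
    rw [← sum_smul_mul_eq_sum_mul_inv_smul]
    exact Fintype.sum_congr _ _ fun y => by rw [hf _ α.2]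
  simp only [stabilizerSum_apply, Finset.mul_sum]
  rw [Finset.sum_comm, Fintype.sum_congr _ _ hterm, Finset.sum_const, Finset.card_univ,
    nsmul_eq_mul, Finset.mul_sum]

end StabilizerSum

section Eigenfunctions

variable {M G : Type*} [Group G] [MulAction G M] {L : (M → ℝ) →ₗ[ℝ] (M → ℝ)}
  {θ : ℝ} {φ : M → ℝ}

theorem eigenfunction_comp_smul_s13
    (hcomm : ∀ (g : G) (f : M → ℝ) (x : M), L (fun z => f (g • z)) x = L f (g • x))
    (hφ : ∀ x, L φ x = θ * φ x) (a : G) (x : M) :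
    L (fun z => φ (a • z)) x = θ * φ (a • x) := by
  rw [hcomm, hφ]

variable [Fintype G] [DecidableEq M]

theorem eigenfunction_stabilizerSum
    (hcomm : ∀ (g : G) (f : M → ℝ) (x : M), L (fun z => f (g • z)) x = L f (g • x))
    (hφ : ∀ x, L φ x = θ * φ x) (o : M) (x : M) :
    L (stabilizerSum G o φ) x = θ * stabilizerSum G o φ x := by
  rw [stabilizerSum, map_sum, Finset.sum_apply, Finset.sum_apply, Finset.mul_sum]
  exact Fintype.sum_congr _ _ fun α => eigenfunction_comp_smul_s13 hcomm hφ _ x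

theorem sum_mul_eigenfunction_eq [Fintype M] (o : M)
    (hcomm : ∀ (g : G) (f : M → ℝ) (x : M), L (fun z => f (g • z)) x = L f (g • x))
    {φθ : M → ℝ}
    (huniq : ∀ ψ : M → ℝ, (∀ x, L ψ x = θ * ψ x) →
      (∀ α : G, α ∈ stabilizer G o → ∀ x, ψ (α • x) = ψ x) → ψ = fun x => ψ o * φθ x)
    {f : M → ℝ} (hf : ∀ α : G, α ∈ stabilizer G o → ∀ x, f (α • x) = f x)
    (hφ : ∀ x, L φ x = θ * φ x) :
    ∑ y, f y * φ y = φ o * ∑ y, f y * φθ y := by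
  have hψ := huniq (stabilizerSum G o φ) (eigenfunction_stabilizerSum hcomm hφ o)
    fun α hα => stabilizerSum_smul_of_mem φ hα
  have hcard : (Fintype.card (stabilizer G o) : ℝ) ≠ 0 := Nat.cast_ne_zero.mpr Fintype.card_ne_zero
  refine mul_left_cancel₀ hcard ?_
  calc Fintype.card (stabilizer G o) * ∑ y, f y * φ y
      = ∑ y, f y * stabilizerSum G o φ y := (sum_mul_stabilizerSum hf φ).symm
    _ = ∑ y, f y * (stabilizerSum G o φ o * φθ y) :=
      Fintype.sum_congr _ _ fun y => congrArg (f y * ·) (congrFun hψ y)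
    _ = Fintype.card (stabilizer G o) * (φ o * ∑ y, f y * φθ y) := by
      simp only [stabilizerSum_self, Finset.mul_sum]
      exact Fintype.sum_congr _ _ fun y => by ring

end Eigenfunctions

theorem stmt_13_general {M : Type*} [Fintype M] [DecidableEq M]
    (I : Type*) [Group I] [Fintype I] [MulAction I M]
    (o : M)
    (L : (M → ℝ) →ₗ[ℝ] (M → ℝ))
    (hcomm : ∀ (g : I) (f : M → ℝ) (x : M), L (fun z => f (g • z)) x = L f (g • x))
    (φθ : ℝ → (M → ℝ))
    (huniq : ∀ (θ : ℝ) (ψ : M → ℝ), (∀ x, L ψ x = θ * ψ x) →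
      (∀ α : I, α ∈ MulAction.stabilizer I o → ∀ x, ψ (α • x) = ψ x) →
      ψ = fun x => ψ o * φθ θ x)
    (t : ℝ) (d : ℕ) (ys : Fin d → M)
    (hdesign : ∀ (θ : ℝ) (φ : M → ℝ), φ ≠ 0 → (∀ x, L φ x = θ * φ x) →
      0 < θ → θ < t → ∑ i, φ (ys i) = 0)
    (τ : Fin d → I) (hτ : ∀ i, τ i • ys i = o)
    (f : M → ℝ)
    (hfinv : ∀ α : I, α ∈ MulAction.stabilizer I o → ∀ x : M, f (α • x) = f x)
    (F : M → ℝ) (hF : ∀ x, F x = ∑ i, f (τ i • x)) :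
    ∀ (θ : ℝ) (φ : M → ℝ), φ ≠ 0 → (∀ x, L φ x = θ * φ x) →
      0 < θ → θ < t → ∑ x, F x * φ x = 0 := by
  intro θ φ hφ heig hθ0 hθt
  have htranslate : ∀ i, ∑ x, f (τ i • x) * φ x = φ (ys i) * ∑ y, f y * φθ θ y := by
    intro i
    rw [sum_smul_mul_eq_sum_mul_inv_smul, sum_mul_eigenfunction_eq o hcomm (huniq θ) hfinv
      (eigenfunction_comp_smul_s13 hcomm heig _), inv_smul_eq_iff.mpr (hτ i).symm]
  calc ∑ x, F x * φ x = ∑ i, ∑ x, f (τ i • x) * φ x := by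
        simp only [hF, Finset.sum_mul]
        exact Finset.sum_comm
    _ = (∑ i, φ (ys i)) * ∑ y, f y * φθ θ y := by simp only [htranslate, Finset.sum_mul]
    _ = 0 := by rw [hdesign θ φ hφ heig hθ0 hθt, zero_mul]

/-- Unique-invariant-eigenfunction lemma (discrete version): let a finite group `I`
act transitively on a finite set `M`, let `Δ` (here `L`) be a symmetric operator
commuting with the action, and suppose every `I₀`-invariant `θ`-eigenfunction is a
multiple of the normalized invariant eigenfunction `φθ θ` (with `φθ θ o = 1`),
where `I₀` is the stabilizer of `o`. If `D = {y₁,…,y_d}` is a design of strength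
`t`, `τᵢ yᵢ = o`, and `f` is `I₀`-invariant, then `F = Σᵢ f∘τᵢ` is orthogonal to
every eigenfunction with eigenvalue in `(0,t)`. -/
theorem stmt_13 {M : Type*} [Fintype M] [DecidableEq M]
    (I : Type*) [Group I] [Fintype I] [MulAction I M]
    (htrans : ∀ x y : M, ∃ g : I, g • x = y)
    (o : M)
    (L : (M → ℝ) →ₗ[ℝ] (M → ℝ))
    (hsym : ∀ f g : M → ℝ, ∑ x, L f x * g x = ∑ x, f x * L g x)
    (hcomm : ∀ (g : I) (f : M → ℝ) (x : M), L (fun z => f (g • z)) x = L f (g • x))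
    (φθ : ℝ → (M → ℝ))
    (hφθo : ∀ θ : ℝ, φθ θ o = 1)
    (huniq : ∀ (θ : ℝ) (ψ : M → ℝ), (∀ x, L ψ x = θ * ψ x) →
      (∀ α : I, α ∈ MulAction.stabilizer I o → ∀ x, ψ (α • x) = ψ x) →
      ψ = fun x => ψ o * φθ θ x)
    (t : ℝ) (d : ℕ) (ys : Fin d → M)
    (hdesign : ∀ (θ : ℝ) (φ : M → ℝ), φ ≠ 0 → (∀ x, L φ x = θ * φ x) →
      0 < θ → θ < t → ∑ i, φ (ys i) = 0)
    (τ : Fin d → I) (hτ : ∀ i, τ i • ys i = o)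
    (f : M → ℝ)
    (hfinv : ∀ α : I, α ∈ MulAction.stabilizer I o → ∀ x : M, f (α • x) = f x)
    (F : M → ℝ) (hF : ∀ x, F x = ∑ i, f (τ i • x)) :
    ∀ (θ : ℝ) (φ : M → ℝ), φ ≠ 0 → (∀ x, L φ x = θ * φ x) →
      0 < θ → θ < t → ∑ x, F x * φ x = 0 :=
  stmt_13_general I o L hcomm φθ huniq t d ys hdesign τ hτ f hfinv F hF
end
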